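/- arXiv:1506.07393 — 7 statements merged into one kernel-verified Lean document; each statement's English description precedes it below -/
import Mathlib

section
/- Let λ and μ be real numbers with λ ≥ μ > 0, let p be a positive integer, let q ∈ (0,1), and let s > 0. Then λ·ln(1−q) + μ·ln[p]_q + λ·ψ_q(s) − μ·ψ_{(p,q)}(s) ≤ 0. -/
open Real

/-- `[p]_q = (1 - q^p)/(1 - q)` -/
noncomputable def pnq (p : ℕ) (q : ℝ) : ℝ := (1 - q ^ p) / (1 - q)

/-- q-psi function via its series representation. -/
noncomputable def psiq (q s : ℝ) : ℝ :=
  -Real.log (1 - q) + Real.log q * ∑' n : ℕ, q ^ (((n : ℝ) + 1) * s) / (1 - q ^ (n + 1))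

/-- (p,q)-psi function via its series representation. -/
noncomputable def psipq (p : ℕ) (q s : ℝ) : ℝ :=
  Real.log (pnq p q) +
    Real.log q * ∑ n ∈ Finset.range p, q ^ (((n : ℝ) + 1) * s) / (1 - q ^ (n + 1))

/-- k-psi function via its series representation. -/
noncomputable def psik (k s : ℝ) : ℝ :=
  (Real.log k - Real.eulerMascheroniConstant) / k - 1 / s +
    ∑' n : ℕ, s / (((n : ℝ) + 1) * k * (((n : ℝ) + 1) * k + s))

/-- (q,k)-psi function via its series representation. -/
noncomputable def psiqk (q k s : ℝ) : ℝ :=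
  -Real.log (1 - q) / k +
    Real.log q * ∑' n : ℕ, q ^ (((n : ℝ) + 1) * k * s) / (1 - q ^ (((n : ℝ) + 1) * k))

/-- Normalized q-Gamma function. -/
noncomputable def Gammaq (q s : ℝ) : ℝ :=
  (1 - q) ^ (-s) *
    Real.exp (∑' n : ℕ, q ^ (((n : ℝ) + 1) * s) / (((n : ℝ) + 1) * (1 - q ^ (n + 1))))

/-- Normalized (p,q)-Gamma function. -/
noncomputable def Gammapq (p : ℕ) (q s : ℝ) : ℝ :=
  (pnq p q) ^ s *
    Real.exp (∑ n ∈ Finset.range p, q ^ (((n : ℝ) + 1) * s) / (((n : ℝ) + 1) * (1 - q ^ (n + 1))))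

/-- Normalized (q,k)-Gamma function. -/
noncomputable def Gammaqk (q k s : ℝ) : ℝ :=
  (1 - q) ^ (-s / k) *
    Real.exp (∑' n : ℕ,
      q ^ (((n : ℝ) + 1) * k * s) / (((n : ℝ) + 1) * k * (1 - q ^ (((n : ℝ) + 1) * k))))

/-- k-Gamma function. -/
noncomputable def Gammak (k s : ℝ) : ℝ :=
  ∫ x in Set.Ioi (0 : ℝ), Real.exp (-(x ^ k) / k) * x ^ (s - 1)

/-!
The logarithmic terms cancel, leaving `ln q · (λ T - μ S)`, where `T` is the (convergent,
geometrically dominated) series in `ψ_q(s)` and `S ≤ T` is its partial sum of length `p`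
appearing in `ψ_{(p,q)}(s)`. All terms are nonnegative, so `λ T ≥ μ T ≥ μ S`, while `ln q < 0`.
-/

noncomputable def qpsiTerm (q s : ℝ) (n : ℕ) : ℝ :=
  q ^ (((n : ℝ) + 1) * s) / (1 - q ^ (n + 1))

section qpsiTerm

variable {q : ℝ} (s : ℝ)

lemma qpsiTerm_nonneg (hq0 : 0 ≤ q) (hq1 : q < 1) (n : ℕ) : 0 ≤ qpsiTerm q s n :=
  div_nonneg (rpow_nonneg hq0 _) (sub_nonneg.2 (pow_le_one₀ hq0 hq1.le))

lemma qpsiTerm_le_geometric (hq0 : 0 ≤ q) (hq1 : q < 1) (n : ℕ) :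
    qpsiTerm q s n ≤ (q ^ s) ^ (n + 1) / (1 - q) := by
  have hpow : q ^ (((n : ℝ) + 1) * s) = (q ^ s) ^ (n + 1) := by
    rw [mul_comm, ← rpow_mul_natCast hq0]
    push_cast
    rfl
  have hden : 1 - q ≤ 1 - q ^ (n + 1) :=
    sub_le_sub_left (pow_le_of_le_one hq0 hq1.le n.succ_ne_zero) 1
  rw [qpsiTerm, hpow]
  exact div_le_div_of_nonneg_left (pow_nonneg (rpow_nonneg hq0 s) _) (sub_pos.2 hq1) hden

variable {s}

lemma summable_qpsiTerm (hq0 : 0 ≤ q) (hq1 : q < 1) (hs : 0 < s) :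
    Summable (qpsiTerm q s) := by
  have hgeom : Summable fun n : ℕ ↦ (q ^ s) ^ (n + 1) / (1 - q) :=
    ((summable_nat_add_iff 1).2
      (summable_geometric_of_lt_one (rpow_nonneg hq0 s) (rpow_lt_one hq0 hq1 hs))).div_const _
  exact hgeom.of_nonneg_of_le (qpsiTerm_nonneg s hq0 hq1) (qpsiTerm_le_geometric s hq0 hq1)

end qpsiTerm

lemma psiq_eq (q s : ℝ) : psiq q s = -log (1 - q) + log q * ∑' n, qpsiTerm q s n := rfl

lemma psipq_eq (p : ℕ) (q s : ℝ) :
    psipq p q s = log (pnq p q) + log q * ∑ n ∈ Finset.range p, qpsiTerm q s n := rfl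

theorem stmt0_general (lam mu : ℝ) (hmu : 0 < mu) (hlm : mu ≤ lam)
    (p : ℕ) (q : ℝ) (hq : q ∈ Set.Ioo (0 : ℝ) 1) (s : ℝ) (hs : 0 < s) :
    lam * Real.log (1 - q) + mu * Real.log (pnq p q) + lam * psiq q s - mu * psipq p q s ≤ 0 := by
  obtain ⟨hq0, hq1⟩ := hq
  have hterm := qpsiTerm_nonneg s hq0.le hq1
  have hpartial : ∑ n ∈ Finset.range p, qpsiTerm q s n ≤ ∑' n, qpsiTerm q s n :=
    (summable_qpsiTerm hq0.le hq1 hs).sum_le_tsum _ fun n _ ↦ hterm n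
  have hpartial_nonneg : 0 ≤ ∑ n ∈ Finset.range p, qpsiTerm q s n :=
    Finset.sum_nonneg fun n _ ↦ hterm n
  have hcollect : lam * log (1 - q) + mu * log (pnq p q) + lam * psiq q s - mu * psipq p q s =
      log q * (lam * ∑' n, qpsiTerm q s n - mu * ∑ n ∈ Finset.range p, qpsiTerm q s n) := by
    rw [psiq_eq, psipq_eq]
    ring
  rw [hcollect]
  exact mul_nonpos_of_nonpos_of_nonneg (log_nonpos hq0.le hq1.le) (by nlinarith)

theorem stmt0 (lam mu : ℝ) (hmu : 0 < mu) (hlm : mu ≤ lam)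
    (p : ℕ) (hp : 0 < p) (q : ℝ) (hq : q ∈ Set.Ioo (0 : ℝ) 1) (s : ℝ) (hs : 0 < s) :
    lam * Real.log (1 - q) + mu * Real.log (pnq p q) + lam * psiq q s - mu * psipq p q s ≤ 0 :=
  stmt0_general lam mu hmu hlm p q hq s hs
end

section
/- Let λ and μ be real numbers with λ ≥ μ > 0, let q ∈ (0,1), let k ≥ 1, and let s > 0. Then λ·ln(1−q) − μ·ln(1−q)/k + λ·ψ_q(s) − μ·ψ_{(q,k)}(s) ≤ 0. -/
open Real

theorem stmt1 (lam mu : ℝ) (hmu : 0 < mu) (hlm : mu ≤ lam)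
    (q : ℝ) (hq : q ∈ Set.Ioo (0 : ℝ) 1) (k : ℝ) (hk : 1 ≤ k) (s : ℝ) (hs : 0 < s) :
    lam * Real.log (1 - q) - mu * Real.log (1 - q) / k
      + lam * psiq q s - mu * psiqk q k s ≤ 0 := by
  obtain ⟨hq0, hq1⟩ := hq
  have hk0 : (0:ℝ) < k := lt_of_lt_of_le one_pos hk
  set a : ℕ → ℝ := fun n => q ^ (((n : ℝ) + 1) * s) / (1 - q ^ (n + 1)) with ha
  set b : ℕ → ℝ := fun n => q ^ (((n : ℝ) + 1) * k * s) / (1 - q ^ (((n : ℝ) + 1) * k)) with hb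
  have hn1 : ∀ n : ℕ, (0:ℝ) < (n:ℝ) + 1 := fun n => by positivity
  have hden1 : ∀ n : ℕ, 0 < 1 - q ^ (n + 1) := fun n =>
    sub_pos.2 (pow_lt_one₀ hq0.le hq1 (Nat.succ_ne_zero n))
  have hden2 : ∀ n : ℕ, 0 < 1 - q ^ (((n:ℝ) + 1) * k) := fun n =>
    sub_pos.2 (Real.rpow_lt_one hq0.le hq1 (by positivity))
  have hnat : ∀ n : ℕ, q ^ (n+1) = q ^ (((n:ℝ)+1)) := by
    intro n
    rw [← Real.rpow_natCast q (n+1)]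
    push_cast
    ring_nf
  have hba : ∀ n, b n ≤ a n := by
    intro n
    apply div_le_div₀ (Real.rpow_nonneg hq0.le _)
    · exact Real.rpow_le_rpow_of_exponent_ge hq0 hq1.le (by nlinarith [mul_pos (hn1 n) hs])
    · exact hden1 n
    · have h1 : q ^ (((n:ℝ)+1) * k) ≤ q ^ (((n:ℝ)+1)) :=
        Real.rpow_le_rpow_of_exponent_ge hq0 hq1.le (by nlinarith [hn1 n])
      rw [hnat n]
      linarith
  have hb0 : ∀ n, 0 ≤ b n := fun n => div_nonneg (Real.rpow_nonneg hq0.le _) (hden2 n).le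
  have ha0 : ∀ n, 0 ≤ a n := fun n => le_trans (hb0 n) (hba n)
  have hqs1 : q ^ s < 1 := Real.rpow_lt_one hq0.le hq1 hs
  have hqs0 : 0 ≤ q ^ s := Real.rpow_nonneg hq0.le s
  have hgeo : Summable (fun n : ℕ => (q ^ s) ^ (n+1) / (1 - q)) := by
    apply Summable.div_const
    have : Summable (fun n : ℕ => (q ^ s) * (q ^ s) ^ n) :=
      (summable_geometric_of_lt_one hqs0 hqs1).mul_left _
    simpa [pow_succ, mul_comm] using this
  have hsa : Summable a := by
    apply Summable.of_nonneg_of_le ha0 _ hgeo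
    intro n
    have hnum : q ^ (((n:ℝ)+1) * s) = (q ^ s) ^ (n+1) := by
      rw [← Real.rpow_natCast (q ^ s) (n+1), ← Real.rpow_mul hq0.le]
      push_cast
      ring_nf
    rw [ha]
    simp only
    rw [hnum]
    have hq' : q ^ (n+1) ≤ q := by
      calc q ^ (n+1) ≤ q ^ 1 := pow_le_pow_of_le_one hq0.le hq1.le (by omega)
        _ = q := pow_one q
    gcongr
  have hsb : Summable b := Summable.of_nonneg_of_le hb0 hba hsa
  have hT : ∑' n, b n ≤ ∑' n, a n := Summable.tsum_le_tsum hba hsb hsa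
  have hT2 : 0 ≤ ∑' n, b n := tsum_nonneg hb0
  have hT1 : 0 ≤ ∑' n, a n := tsum_nonneg ha0
  have hlogq : Real.log q ≤ 0 := Real.log_nonpos hq0.le hq1.le
  have key : lam * Real.log (1 - q) - mu * Real.log (1 - q) / k
      + lam * psiq q s - mu * psiqk q k s
      = Real.log q * (lam * ∑' n, a n - mu * ∑' n, b n) := by
    rw [psiq, psiqk, ha, hb]
    ring
  rw [key]
  apply mul_nonpos_of_nonpos_of_nonneg hlogq
  have : mu * ∑' n, b n ≤ lam * ∑' n, a n := by
    calc mu * ∑' n, b n ≤ mu * ∑' n, a n := by nlinarith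
      _ ≤ lam * ∑' n, a n := by nlinarith
  linarith
end

section
/- Let g : [0,∞) → ℝ be a positive, increasing, differentiable function, let p be a positive integer, let q ∈ (0,1), and let λ ≥ μ > 0 be real numbers. Then for all x, y with 0 < x < y, the following double inequality holds: (1−q)^{λ(g(0)−g(x))}·Γ_q(g(0))^λ / ([p]_q^{−μ(g(0)−g(x))}·Γ_{(p,q)}(g(0))^μ) ≥ Γ_q(g(x))^λ / Γ_{(p,q)}(g(x))^μ ≥ (1−q)^{λ(g(y)−g(x))}·Γ_q(g(y))^λ / ([p]_q^{−μ(g(y)−g(x))}·Γ_{(p,q)}(g(y))^μ). -/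
open Real

noncomputable def qterm (q s : ℝ) (n : ℕ) : ℝ :=
  q ^ (((n : ℝ) + 1) * s) / (((n : ℝ) + 1) * (1 - q ^ (n + 1)))

lemma qterm_denom_pos {q : ℝ} (hq : q ∈ Set.Ioo (0 : ℝ) 1) (n : ℕ) :
    0 < ((n : ℝ) + 1) * (1 - q ^ (n + 1)) := by
  have h1 : q ^ (n + 1) < 1 := pow_lt_one₀ hq.1.le hq.2 (Nat.succ_ne_zero n)
  have h2 : (0 : ℝ) < (n : ℝ) + 1 := by positivity
  nlinarith

lemma qterm_nonneg {q : ℝ} (hq : q ∈ Set.Ioo (0 : ℝ) 1) (s : ℝ) (n : ℕ) :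
    0 ≤ qterm q s n :=
  div_nonneg (Real.rpow_nonneg hq.1.le _) (qterm_denom_pos hq n).le

lemma qterm_summable {q : ℝ} (hq : q ∈ Set.Ioo (0 : ℝ) 1) {s : ℝ} (hs : 0 < s) :
    Summable (qterm q s) := by
  obtain ⟨hq0, hq1⟩ := hq
  have hr0 : 0 < q ^ s := Real.rpow_pos_of_pos hq0 s
  have hr1 : q ^ s < 1 := Real.rpow_lt_one hq0.le hq1 hs
  have hc : (0 : ℝ) < 1 - q := by linarith
  have hsum : Summable (fun n : ℕ => (q ^ s) ^ (n + 1) / (1 - q)) := by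
    have h2 := ((summable_geometric_of_lt_one hr0.le hr1).mul_left (q ^ s)).div_const (1 - q)
    refine h2.congr fun n => ?_
    rw [pow_succ]
    ring
  refine hsum.of_nonneg_of_le (fun n => qterm_nonneg ⟨hq0, hq1⟩ s n) (fun n => ?_)
  have hnum : q ^ (((n : ℝ) + 1) * s) = (q ^ s) ^ (n + 1) := by
    rw [mul_comm, Real.rpow_mul hq0.le,
      show ((n : ℝ) + 1) = ((n + 1 : ℕ) : ℝ) by push_cast; ring, Real.rpow_natCast]
  have hden : 1 - q ≤ ((n : ℝ) + 1) * (1 - q ^ (n + 1)) := by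
    have h1 : q ^ (n + 1) ≤ q := by
      calc q ^ (n + 1) ≤ q ^ 1 := pow_le_pow_of_le_one hq0.le hq1.le (by omega)
        _ = q := pow_one q
    have h2 : (1 : ℝ) ≤ (n : ℝ) + 1 := by
      have := Nat.cast_nonneg (α := ℝ) n; linarith
    nlinarith
  unfold qterm
  rw [hnum]
  exact div_le_div_of_nonneg_left (by positivity) hc hden

lemma qterm_anti {q : ℝ} (hq : q ∈ Set.Ioo (0 : ℝ) 1) {s t : ℝ} (hst : s ≤ t) (n : ℕ) :
    qterm q t n ≤ qterm q s n := by
  unfold qterm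
  have hnum : q ^ (((n : ℝ) + 1) * t) ≤ q ^ (((n : ℝ) + 1) * s) :=
    Real.rpow_le_rpow_of_exponent_ge hq.1 hq.2.le
      (mul_le_mul_of_nonneg_left hst (by positivity))
  have hd := qterm_denom_pos hq n
  gcongr

lemma key_mono {q : ℝ} (hq : q ∈ Set.Ioo (0 : ℝ) 1) (p : ℕ) {lam mu : ℝ}
    (hmu : 0 < mu) (hlm : mu ≤ lam) {s t : ℝ} (hs : 0 < s) (hst : s ≤ t) :
    lam * (∑' n : ℕ, qterm q t n) - mu * (∑ n ∈ Finset.range p, qterm q t n) ≤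
      lam * (∑' n : ℕ, qterm q s n) - mu * (∑ n ∈ Finset.range p, qterm q s n) := by
  have ht : 0 < t := hs.trans_le hst
  have Ss := qterm_summable hq hs
  have St := qterm_summable hq ht
  have hAB : (∑' n : ℕ, qterm q t n) ≤ ∑' n : ℕ, qterm q s n :=
    Summable.tsum_le_tsum (qterm_anti hq hst) St Ss
  have hBA : (∑ n ∈ Finset.range p, (qterm q s n - qterm q t n)) ≤
      ∑' n : ℕ, (qterm q s n - qterm q t n) :=
    Summable.sum_le_tsum _ (fun n _ => sub_nonneg.2 (qterm_anti hq hst n)) (Ss.sub St)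
  rw [Summable.tsum_sub Ss St, Finset.sum_sub_distrib] at hBA
  nlinarith

lemma log_Gammaq {q : ℝ} (hq : q ∈ Set.Ioo (0 : ℝ) 1) (v : ℝ) :
    Real.log (Gammaq q v) = -v * Real.log (1 - q) + ∑' n : ℕ, qterm q v n := by
  have hc : (0 : ℝ) < 1 - q := by have := hq.2; linarith
  unfold Gammaq
  rw [Real.log_mul (ne_of_gt (Real.rpow_pos_of_pos hc _)) (Real.exp_ne_zero _),
    Real.log_rpow hc, Real.log_exp]
  rfl

lemma pnq_pos {p : ℕ} {q : ℝ} (hq : q ∈ Set.Ioo (0 : ℝ) 1) (hp : 0 < p) :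
    0 < pnq p q := by
  have h1 : q ^ p < 1 := pow_lt_one₀ hq.1.le hq.2 hp.ne'
  have hc : (0 : ℝ) < 1 - q := by have := hq.2; linarith
  exact div_pos (by linarith) hc

lemma log_Gammapq {p : ℕ} {q : ℝ} (hq : q ∈ Set.Ioo (0 : ℝ) 1) (hp : 0 < p) (v : ℝ) :
    Real.log (Gammapq p q v) =
      v * Real.log (pnq p q) + ∑ n ∈ Finset.range p, qterm q v n := by
  unfold Gammapq
  rw [Real.log_mul (ne_of_gt (Real.rpow_pos_of_pos (pnq_pos hq hp) _)) (Real.exp_ne_zero _),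
    Real.log_rpow (pnq_pos hq hp), Real.log_exp]
  rfl

lemma Gammaq_pos {q : ℝ} (hq : q ∈ Set.Ioo (0 : ℝ) 1) (v : ℝ) : 0 < Gammaq q v := by
  have hc : (0 : ℝ) < 1 - q := by have := hq.2; linarith
  exact mul_pos (Real.rpow_pos_of_pos hc _) (Real.exp_pos _)

lemma Gammapq_pos {p : ℕ} {q : ℝ} (hq : q ∈ Set.Ioo (0 : ℝ) 1) (hp : 0 < p) (v : ℝ) :
    0 < Gammapq p q v :=
  mul_pos (Real.rpow_pos_of_pos (pnq_pos hq hp) _) (Real.exp_pos _)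

lemma main_mono {p : ℕ} {q : ℝ} (hq : q ∈ Set.Ioo (0 : ℝ) 1) (hp : 0 < p)
    {lam mu : ℝ} (hmu : 0 < mu) (hlm : mu ≤ lam) (u : ℝ) {s t : ℝ}
    (hs : 0 < s) (hst : s ≤ t) :
    (1 - q) ^ (lam * (t - u)) * Gammaq q t ^ lam /
        ((pnq p q) ^ (-(mu * (t - u))) * Gammapq p q t ^ mu) ≤
      (1 - q) ^ (lam * (s - u)) * Gammaq q s ^ lam /
        ((pnq p q) ^ (-(mu * (s - u))) * Gammapq p q s ^ mu) := by
  have hc : (0 : ℝ) < 1 - q := by have := hq.2; linarith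
  have hP := pnq_pos hq hp
  have hGq := Gammaq_pos hq
  have hGpq := Gammapq_pos hq hp
  have hL : 0 < (1 - q) ^ (lam * (t - u)) * Gammaq q t ^ lam /
      ((pnq p q) ^ (-(mu * (t - u))) * Gammapq p q t ^ mu) :=
    div_pos (mul_pos (Real.rpow_pos_of_pos hc _) (Real.rpow_pos_of_pos (hGq t) _))
      (mul_pos (Real.rpow_pos_of_pos hP _) (Real.rpow_pos_of_pos (hGpq t) _))
  have hR : 0 < (1 - q) ^ (lam * (s - u)) * Gammaq q s ^ lam /
      ((pnq p q) ^ (-(mu * (s - u))) * Gammapq p q s ^ mu) :=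
    div_pos (mul_pos (Real.rpow_pos_of_pos hc _) (Real.rpow_pos_of_pos (hGq s) _))
      (mul_pos (Real.rpow_pos_of_pos hP _) (Real.rpow_pos_of_pos (hGpq s) _))
  rw [← Real.log_le_log_iff hL hR,
    Real.log_div (ne_of_gt (mul_pos (Real.rpow_pos_of_pos hc _)
        (Real.rpow_pos_of_pos (hGq t) _)))
      (ne_of_gt (mul_pos (Real.rpow_pos_of_pos hP _) (Real.rpow_pos_of_pos (hGpq t) _))),
    Real.log_div (ne_of_gt (mul_pos (Real.rpow_pos_of_pos hc _)
        (Real.rpow_pos_of_pos (hGq s) _)))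
      (ne_of_gt (mul_pos (Real.rpow_pos_of_pos hP _) (Real.rpow_pos_of_pos (hGpq s) _))),
    Real.log_mul (ne_of_gt (Real.rpow_pos_of_pos hc _))
      (ne_of_gt (Real.rpow_pos_of_pos (hGq t) _)),
    Real.log_mul (ne_of_gt (Real.rpow_pos_of_pos hc _))
      (ne_of_gt (Real.rpow_pos_of_pos (hGq s) _)),
    Real.log_mul (ne_of_gt (Real.rpow_pos_of_pos hP _))
      (ne_of_gt (Real.rpow_pos_of_pos (hGpq t) _)),
    Real.log_mul (ne_of_gt (Real.rpow_pos_of_pos hP _))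
      (ne_of_gt (Real.rpow_pos_of_pos (hGpq s) _)),
    Real.log_rpow hc, Real.log_rpow hc, Real.log_rpow hP, Real.log_rpow hP,
    Real.log_rpow (hGq t), Real.log_rpow (hGq s),
    Real.log_rpow (hGpq t), Real.log_rpow (hGpq s),
    log_Gammaq hq, log_Gammaq hq, log_Gammapq hq hp, log_Gammapq hq hp]
  have hkey := key_mono hq p hmu hlm hs hst
  nlinarith [hkey]

theorem stmt4 (g : ℝ → ℝ) (hgpos : ∀ t ∈ Set.Ici (0 : ℝ), 0 < g t)
    (hgmono : MonotoneOn g (Set.Ici (0 : ℝ)))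
    (hgdiff : DifferentiableOn ℝ g (Set.Ici (0 : ℝ)))
    (p : ℕ) (hp : 0 < p) (q : ℝ) (hq : q ∈ Set.Ioo (0 : ℝ) 1)
    (lam mu : ℝ) (hmu : 0 < mu) (hlm : mu ≤ lam)
    (x y : ℝ) (hx : 0 < x) (hxy : x < y) :
    (1 - q) ^ (lam * (g 0 - g x)) * (Gammaq q (g 0)) ^ lam /
        ((pnq p q) ^ (-(mu * (g 0 - g x))) * (Gammapq p q (g 0)) ^ mu) ≥
      (Gammaq q (g x)) ^ lam / (Gammapq p q (g x)) ^ mu ∧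
    (Gammaq q (g x)) ^ lam / (Gammapq p q (g x)) ^ mu ≥
      (1 - q) ^ (lam * (g y - g x)) * (Gammaq q (g y)) ^ lam /
        ((pnq p q) ^ (-(mu * (g y - g x))) * (Gammapq p q (g y)) ^ mu) := by
  have h0 : (0 : ℝ) ∈ Set.Ici (0 : ℝ) := Set.self_mem_Ici
  have hxm : x ∈ Set.Ici (0 : ℝ) := Set.mem_Ici.2 hx.le
  have hym : y ∈ Set.Ici (0 : ℝ) := Set.mem_Ici.2 (hx.trans hxy).le
  constructor
  · have h := main_mono hq hp hmu hlm (g x) (hgpos 0 h0) (hgmono h0 hxm hx.le)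
    simpa [sub_self, mul_zero, neg_zero, Real.rpow_zero] using h
  · have h := main_mono hq hp hmu hlm (g x) (hgpos x hxm) (hgmono hxm hym hxy.le)
    simpa [sub_self, mul_zero, neg_zero, Real.rpow_zero] using h
end

section
/- Let g : [0,∞) → ℝ be a positive, increasing, differentiable function, let q ∈ (0,1), let k ≥ 1, and let λ ≥ μ > 0 be real numbers. Then for all x, y with 0 < x < y, the following double inequality holds: (1−q)^{λ(g(0)−g(x))}·Γ_q(g(0))^λ / ((1−q)^{(μ/k)(g(0)−g(x))}·Γ_{(q,k)}(g(0))^μ) ≥ Γ_q(g(x))^λ / Γ_{(q,k)}(g(x))^μ ≥ (1−q)^{λ(g(y)−g(x))}·Γ_q(g(y))^λ / ((1−q)^{(μ/k)(g(y)−g(x))}·Γ_{(q,k)}(g(y))^μ). -/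
open Real

open Set

/-! Up to a factor depending only on `s`, the quotient is `exp (λ A u - μ B u)`, where `A` and `B`
are the series `∑ₙ qGammaTerm q t u` over `t = n + 1` and `t = (n + 1) k`. The `u`-derivative of
`qGammaTerm q t u` is `log q · q ^ (t u) / (1 - q ^ t)`, and `q ^ (t u) / (1 - q ^ t)` decreases
in `t`; as `t ≤ t k` and `μ ≤ λ`, each summand of `λ A - μ B` is antitone in `u`. The two
inequalities are this antitonicity at `g 0 ≤ g x ≤ g y`. -/

noncomputable def qGammaTerm (q t s : ℝ) : ℝ := q ^ (t * s) / (t * (1 - q ^ t))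

lemma hasDerivAt_qGammaTerm {q t : ℝ} (hq : 0 < q) (ht : t ≠ 0) (s : ℝ) :
    HasDerivAt (qGammaTerm q t) (Real.log q * (q ^ (t * s) / (1 - q ^ t))) s := by
  have h := (((hasDerivAt_id s).const_mul t).const_rpow hq).div_const (t * (1 - q ^ t))
  refine h.congr_deriv ?_
  rw [id, mul_one, mul_assoc, mul_div_assoc, mul_div_mul_left _ _ ht]

lemma rpow_mul_div_one_sub_rpow_le {q s t₁ t₂ : ℝ} (hq₀ : 0 < q) (hq₁ : q < 1) (hs : 0 ≤ s)
    (ht₁ : 0 < t₁) (ht : t₁ ≤ t₂) :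
    q ^ (t₂ * s) / (1 - q ^ t₂) ≤ q ^ (t₁ * s) / (1 - q ^ t₁) := by
  apply div_le_div₀ (Real.rpow_nonneg hq₀.le _)
  · exact Real.rpow_le_rpow_of_exponent_ge hq₀ hq₁.le (mul_le_mul_of_nonneg_right ht hs)
  · linarith [Real.rpow_lt_one hq₀.le hq₁ ht₁]
  · linarith [Real.rpow_le_rpow_of_exponent_ge hq₀ hq₁.le ht]

lemma antitoneOn_qGammaTerm_sub {q t k lam mu : ℝ} (hq₀ : 0 < q) (hq₁ : q < 1) (ht : 0 < t)
    (hk : 1 ≤ k) (hmu : 0 ≤ mu) (hlm : mu ≤ lam) :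
    AntitoneOn (fun s => lam * qGammaTerm q t s - mu * qGammaTerm q (t * k) s) (Ici 0) := by
  have htk : t ≤ t * k := le_mul_of_one_le_right ht.le hk
  have hderiv (s : ℝ) := ((hasDerivAt_qGammaTerm hq₀ ht.ne' s).const_mul lam).sub
    ((hasDerivAt_qGammaTerm hq₀ (ht.trans_le htk).ne' s).const_mul mu)
  refine antitoneOn_of_hasDerivWithinAt_nonpos (convex_Ici 0)
    (fun s _ => (hderiv s).continuousAt.continuousWithinAt)
    (fun s _ => (hderiv s).hasDerivWithinAt) fun s hs => ?_
  rw [interior_Ici, mem_Ioi] at hs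
  have hratio := rpow_mul_div_one_sub_rpow_le hq₀ hq₁ hs.le ht htk
  have hnonneg : 0 ≤ q ^ (t * s) / (1 - q ^ t) :=
    div_nonneg (Real.rpow_nonneg hq₀.le _) (by linarith [Real.rpow_lt_one hq₀.le hq₁ ht])
  have hlog : Real.log q < 0 := Real.log_neg hq₀ hq₁
  nlinarith [mul_le_mul_of_nonneg_left hratio hmu, mul_le_mul_of_nonneg_right hlm hnonneg]

lemma summable_qGammaTerm {q t s : ℝ} (hq₀ : 0 < q) (hq₁ : q < 1) (ht : 0 < t) (hs : 0 < s) :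
    Summable (fun n : ℕ => qGammaTerm q (((n : ℝ) + 1) * t) s) := by
  have hqt : q ^ t < 1 := Real.rpow_lt_one hq₀.le hq₁ ht
  have hgeom : Summable (fun n : ℕ => (q ^ (t * s)) ^ (n + 1) / (t * (1 - q ^ t))) :=
    ((summable_nat_add_iff 1).2 (summable_geometric_of_lt_one (Real.rpow_nonneg hq₀.le _)
      (Real.rpow_lt_one hq₀.le hq₁ (mul_pos ht hs)))).div_const _
  refine hgeom.of_nonneg_of_le (fun n => ?_) (fun n => ?_)
  · have : q ^ (((n : ℝ) + 1) * t) < 1 := Real.rpow_lt_one hq₀.le hq₁ (by positivity)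
    exact div_nonneg (Real.rpow_nonneg hq₀.le _) (mul_nonneg (by positivity) (by linarith))
  · have hn : (1 : ℝ) ≤ (n : ℝ) + 1 := le_add_of_nonneg_left n.cast_nonneg
    have hpow : q ^ (((n : ℝ) + 1) * t * s) = (q ^ (t * s)) ^ (n + 1) := by
      rw [← Real.rpow_natCast, ← Real.rpow_mul hq₀.le]
      push_cast
      ring_nf
    have hden : t * (1 - q ^ t) ≤ ((n : ℝ) + 1) * t * (1 - q ^ (((n : ℝ) + 1) * t)) :=
      mul_le_mul (le_mul_of_one_le_left ht.le hn)
        (by linarith [Real.rpow_le_rpow_of_exponent_ge hq₀ hq₁.le (le_mul_of_one_le_left ht.le hn)])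
        (by linarith) (by positivity)
    rw [qGammaTerm, hpow]
    exact div_le_div_of_nonneg_left (by positivity) (mul_pos ht (by linarith)) hden

lemma Gammaq_eq_exp {q : ℝ} (hq₁ : q < 1) (s : ℝ) :
    Gammaq q s = Real.exp (-s * Real.log (1 - q) + ∑' n : ℕ, qGammaTerm q ((n : ℝ) + 1) s) := by
  rw [Gammaq, Real.rpow_def_of_pos (sub_pos.2 hq₁), ← Real.exp_add, mul_comm (Real.log _)]
  congr 3
  funext n
  rw [qGammaTerm, ← Real.rpow_natCast]
  push_cast
  rfl

lemma Gammaqk_eq_exp {q : ℝ} (hq₁ : q < 1) (k s : ℝ) :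
    Gammaqk q k s =
      Real.exp (-s / k * Real.log (1 - q) + ∑' n : ℕ, qGammaTerm q (((n : ℝ) + 1) * k) s) := by
  rw [Gammaqk, Real.rpow_def_of_pos (sub_pos.2 hq₁), ← Real.exp_add, mul_comm (Real.log _)]
  rfl

lemma antitoneOn_tsum_qGammaTerm_sub {q k lam mu : ℝ} (hq₀ : 0 < q) (hq₁ : q < 1) (hk : 1 ≤ k)
    (hmu : 0 ≤ mu) (hlm : mu ≤ lam) :
    AntitoneOn (fun s => lam * ∑' n : ℕ, qGammaTerm q ((n : ℝ) + 1) s -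
      mu * ∑' n : ℕ, qGammaTerm q (((n : ℝ) + 1) * k) s) (Ioi 0) := by
  have hA {s : ℝ} (hs : 0 < s) : Summable (fun n : ℕ => qGammaTerm q ((n : ℝ) + 1) s) := by
    simpa only [mul_one] using summable_qGammaTerm hq₀ hq₁ one_pos hs
  have hB {s : ℝ} (hs : 0 < s) : Summable (fun n : ℕ => qGammaTerm q (((n : ℝ) + 1) * k) s) :=
    summable_qGammaTerm hq₀ hq₁ (one_pos.trans_le hk) hs
  intro s hs u hu hsu
  simp only [← tsum_mul_left]
  rw [← ((hA hs).mul_left lam).tsum_sub ((hB hs).mul_left mu),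
    ← ((hA hu).mul_left lam).tsum_sub ((hB hu).mul_left mu)]
  refine Summable.tsum_le_tsum (fun n => ?_) (((hA hu).mul_left lam).sub ((hB hu).mul_left mu))
    (((hA hs).mul_left lam).sub ((hB hs).mul_left mu))
  exact antitoneOn_qGammaTerm_sub hq₀ hq₁ (by positivity) hk hmu hlm (mem_Ici.2 hs.le)
    (mem_Ici.2 hu.le) hsu

noncomputable def qGammaQuotient (q k lam mu s u : ℝ) : ℝ :=
  (1 - q) ^ (lam * (u - s)) * Gammaq q u ^ lam / ((1 - q) ^ (mu / k * (u - s)) * Gammaqk q k u ^ mu)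

lemma qGammaQuotient_eq_exp {q : ℝ} (hq₁ : q < 1) (k lam mu s u : ℝ) :
    qGammaQuotient q k lam mu s u =
      Real.exp (lam * ∑' n : ℕ, qGammaTerm q ((n : ℝ) + 1) u -
        mu * ∑' n : ℕ, qGammaTerm q (((n : ℝ) + 1) * k) u +
          (mu / k - lam) * s * Real.log (1 - q)) := by
  rw [qGammaQuotient, Gammaq_eq_exp hq₁, Gammaqk_eq_exp hq₁, Real.rpow_def_of_pos (sub_pos.2 hq₁),
    Real.rpow_def_of_pos (sub_pos.2 hq₁), ← Real.exp_mul, ← Real.exp_mul, ← Real.exp_add,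
    ← Real.exp_add, ← Real.exp_sub]
  ring_nf

lemma antitoneOn_qGammaQuotient {q k lam mu : ℝ} (hq₀ : 0 < q) (hq₁ : q < 1) (hk : 1 ≤ k)
    (hmu : 0 ≤ mu) (hlm : mu ≤ lam) (s : ℝ) :
    AntitoneOn (qGammaQuotient q k lam mu s) (Ioi 0) := by
  intro u hu v hv huv
  rw [qGammaQuotient_eq_exp hq₁, qGammaQuotient_eq_exp hq₁, Real.exp_le_exp]
  linarith [antitoneOn_tsum_qGammaTerm_sub hq₀ hq₁ hk hmu hlm hu hv huv]

theorem stmt5_general (g : ℝ → ℝ) (hgpos : ∀ t ∈ Set.Ici (0 : ℝ), 0 < g t)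
    (hgmono : MonotoneOn g (Set.Ici (0 : ℝ)))
    (q : ℝ) (hq : q ∈ Set.Ioo (0 : ℝ) 1) (k : ℝ) (hk : 1 ≤ k)
    (lam mu : ℝ) (hmu : 0 < mu) (hlm : mu ≤ lam)
    (x y : ℝ) (hx : 0 < x) (hxy : x < y) :
    (1 - q) ^ (lam * (g 0 - g x)) * (Gammaq q (g 0)) ^ lam /
        ((1 - q) ^ (mu / k * (g 0 - g x)) * (Gammaqk q k (g 0)) ^ mu) ≥
      (Gammaq q (g x)) ^ lam / (Gammaqk q k (g x)) ^ mu ∧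
    (Gammaq q (g x)) ^ lam / (Gammaqk q k (g x)) ^ mu ≥
      (1 - q) ^ (lam * (g y - g x)) * (Gammaq q (g y)) ^ lam /
        ((1 - q) ^ (mu / k * (g y - g x)) * (Gammaqk q k (g y)) ^ mu) := by
  have h0 : (0 : ℝ) ∈ Ici 0 := mem_Ici.2 le_rfl
  have hx' : x ∈ Ici 0 := mem_Ici.2 hx.le
  have hy' : y ∈ Ici 0 := mem_Ici.2 (hx.trans hxy).le
  have hg0 : 0 < g 0 := hgpos 0 h0
  have hg0x : g 0 ≤ g x := hgmono h0 hx' hx.le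
  have hgxy : g x ≤ g y := hgmono hx' hy' hxy.le
  have hanti := antitoneOn_qGammaQuotient hq.1 hq.2 hk hmu.le hlm (g x)
  have hdiag : qGammaQuotient q k lam mu (g x) (g x) =
      Gammaq q (g x) ^ lam / Gammaqk q k (g x) ^ mu := by
    simp [qGammaQuotient]
  rw [← hdiag]
  exact ⟨hanti hg0 (hg0.trans_le hg0x) hg0x,
    hanti (hg0.trans_le hg0x) (hg0.trans_le (hg0x.trans hgxy)) hgxy⟩

theorem stmt5 (g : ℝ → ℝ) (hgpos : ∀ t ∈ Set.Ici (0 : ℝ), 0 < g t)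
    (hgmono : MonotoneOn g (Set.Ici (0 : ℝ)))
    (hgdiff : DifferentiableOn ℝ g (Set.Ici (0 : ℝ)))
    (q : ℝ) (hq : q ∈ Set.Ioo (0 : ℝ) 1) (k : ℝ) (hk : 1 ≤ k)
    (lam mu : ℝ) (hmu : 0 < mu) (hlm : mu ≤ lam)
    (x y : ℝ) (hx : 0 < x) (hxy : x < y) :
    (1 - q) ^ (lam * (g 0 - g x)) * (Gammaq q (g 0)) ^ lam /
        ((1 - q) ^ (mu / k * (g 0 - g x)) * (Gammaqk q k (g 0)) ^ mu) ≥
      (Gammaq q (g x)) ^ lam / (Gammaqk q k (g x)) ^ mu ∧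
    (Gammaq q (g x)) ^ lam / (Gammaqk q k (g x)) ^ mu ≥
      (1 - q) ^ (lam * (g y - g x)) * (Gammaq q (g y)) ^ lam /
        ((1 - q) ^ (mu / k * (g y - g x)) * (Gammaqk q k (g y)) ^ mu) :=
  stmt5_general g hgpos hgmono q hq k hk lam mu hmu hlm x y hx hxy
end

section
/- Let g : [0,∞) → ℝ be a positive, strictly increasing, differentiable function, let k > 0, let q ∈ (0,1), and let λ > 0 and μ > 0 be real numbers. Then for all x, y with 0 < x < y, the following strict double inequality holds: g(0)^λ·e^{(λγ/k)(g(0)−g(x))}·Γ_k(g(0))^λ / (g(x)^λ·k^{(λ/k)(g(0)−g(x))}·(1−q)^{(μ/k)(g(0)−g(x))}·Γ_{(q,k)}(g(0))^μ) < Γ_k(g(x))^λ / Γ_{(q,k)}(g(x))^μ < g(y)^λ·e^{(λγ/k)(g(y)−g(x))}·Γ_k(g(y))^λ / (g(x)^λ·k^{(λ/k)(g(y)−g(x))}·(1−q)^{(μ/k)(g(y)−g(x))}·Γ_{(q,k)}(g(y))^μ). -/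
open Real

/-!
Since `s Γ_k(s) = k^{s/k} Γ(s/k + 1)` and `log Γ_{(q,k)}(s) = -(s/k) log(1-q) + S(s)` with `S` the
defining series, both bounds equal `Γ_k(g x)^λ / Γ_{(q,k)}(g x)^μ` times `exp (Φ(g t) - Φ(g x))`,
where `Φ(s) = λ (log Γ(s/k + 1) + γ s/k) - μ S(s)`. The theorem is thus the strict monotonicity of `Φ`:
`log Γ(v) + γ v` is convex with derivative `0` at `v = 1`, hence nondecreasing on `[1, ∞)`, and
every term of `S` is strictly decreasing in `s`.
-/

open Set

local notation "γ" => Real.eulerMascheroniConstant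

section kGamma

variable {k s : ℝ}

theorem Gammak_eq_rpow_mul_Gamma (hk : 0 < k) (hs : 0 < s) :
    Gammak k s = k ^ (s / k - 1) * Gamma (s / k) := by
  have h := integral_rpow_mul_exp_neg_mul_rpow hk (show -1 < s - 1 by linarith) (inv_pos.2 hk)
  rw [sub_add_cancel, inv_rpow hk.le, ← rpow_neg hk.le, neg_div, neg_neg] at h
  rw [Gammak, rpow_sub hk, rpow_one]
  convert h using 1
  · refine MeasureTheory.setIntegral_congr_fun measurableSet_Ioi fun x _ => ?_
    rw [mul_comm, neg_div, neg_mul, inv_mul_eq_div]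
  · field_simp

theorem Gammak_pos (hk : 0 < k) (hs : 0 < s) : 0 < Gammak k s := by
  rw [Gammak_eq_rpow_mul_Gamma hk hs]
  exact mul_pos (rpow_pos_of_pos hk _) (Gamma_pos_of_pos (div_pos hs hk))

theorem mul_Gammak (hk : 0 < k) (hs : 0 < s) :
    s * Gammak k s = k ^ (s / k) * Gamma (s / k + 1) := by
  rw [Gammak_eq_rpow_mul_Gamma hk hs, Gamma_add_one (div_pos hs hk).ne', rpow_sub hk, rpow_one]
  field_simp

end kGamma

theorem ConvexOn.monotoneOn_of_hasDerivAt_eq_zero {S : Set ℝ} {f : ℝ → ℝ} {a : ℝ}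
    (hf : ConvexOn ℝ S f) (ha : a ∈ S) (hf' : HasDerivAt f 0 a) :
    MonotoneOn f (S ∩ Ici a) := by
  have base : ∀ t ∈ S, a < t → f a ≤ f t := fun t ht hat => by
    have := hf.le_slope_of_hasDerivAt ha ht hat hf'
    rw [slope_def_field, le_div_iff₀ (sub_pos.2 hat)] at this
    linarith
  rintro s ⟨hs, has : a ≤ s⟩ t ⟨ht, -⟩ hst
  rcases hst.eq_or_lt with rfl | hst
  · exact le_rfl
  rcases has.eq_or_lt with rfl | has
  · exact base t ht hst
  have hslope := hf.slope_mono_adjacent ha ht has hst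
  have : 0 ≤ (f t - f s) / (t - s) :=
    (div_nonneg (sub_nonneg.2 (base s hs has)) (sub_pos.2 has).le).trans hslope
  rwa [le_div_iff₀ (sub_pos.2 hst), zero_mul, sub_nonneg] at this

theorem monotoneOn_log_Gamma_add_eulerMascheroni_mul :
    MonotoneOn (fun v => log (Gamma v) + γ * v) (Ici 1) := by
  have hconv : ConvexOn ℝ (Ioi 0) (fun v => log (Gamma v) + γ * v) :=
    convexOn_log_Gamma.add ((LinearMap.mulLeft ℝ γ).convexOn (convex_Ioi 0))
  have hderiv : HasDerivAt (fun v => log (Gamma v) + γ * v) 0 1 := by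
    have hlog : HasDerivAt (fun v => log (Gamma v)) (-γ) 1 := by
      simpa using hasDerivAt_Gamma_one.log (by simp)
    exact (hlog.add ((hasDerivAt_id' (1 : ℝ)).const_mul γ)).congr_deriv (by ring)
  simpa [inter_eq_right.2 (Ici_subset_Ioi.2 one_pos)] using
    hconv.monotoneOn_of_hasDerivAt_eq_zero (mem_Ioi.2 one_pos) hderiv

section qkGamma

variable {q k s : ℝ}

noncomputable def GammaqkTerm (q k s : ℝ) (n : ℕ) : ℝ :=
  q ^ (((n : ℝ) + 1) * k * s) / (((n : ℝ) + 1) * k * (1 - q ^ (((n : ℝ) + 1) * k)))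

noncomputable def GammaqkSeries (q k s : ℝ) : ℝ := ∑' n, GammaqkTerm q k s n

theorem Gammaqk_pos (hq1 : q < 1) : 0 < Gammaqk q k s :=
  mul_pos (rpow_pos_of_pos (sub_pos.2 hq1) _) (exp_pos _)

theorem log_Gammaqk (hq1 : q < 1) :
    log (Gammaqk q k s) = -s / k * log (1 - q) + GammaqkSeries q k s := by
  rw [Gammaqk, log_mul (rpow_pos_of_pos (sub_pos.2 hq1) _).ne' (exp_ne_zero _),
    log_rpow (sub_pos.2 hq1), log_exp]
  rfl

variable (hq0 : 0 < q) (hq1 : q < 1) (hk : 0 < k)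
include hq0 hq1 hk

theorem GammaqkTerm_denom_pos (n : ℕ) :
    0 < ((n : ℝ) + 1) * k * (1 - q ^ (((n : ℝ) + 1) * k)) :=
  mul_pos (by positivity) (sub_pos.2 (rpow_lt_one hq0.le hq1 (by positivity)))

theorem GammaqkTerm_pos (n : ℕ) : 0 < GammaqkTerm q k s n :=
  div_pos (rpow_pos_of_pos hq0 _) (GammaqkTerm_denom_pos hq0 hq1 hk n)

theorem GammaqkTerm_le_geometric (n : ℕ) :
    GammaqkTerm q k s n ≤ (q ^ (k * s)) ^ (n + 1) / (k * (1 - q ^ k)) := by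
  have hqk : q ^ k < 1 := rpow_lt_one hq0.le hq1 hk
  have hden : k * (1 - q ^ k) ≤ ((n : ℝ) + 1) * k * (1 - q ^ (((n : ℝ) + 1) * k)) := by
    have hn : (1 : ℝ) ≤ n + 1 := le_add_of_nonneg_left n.cast_nonneg
    have hqn : q ^ (((n : ℝ) + 1) * k) ≤ q ^ k :=
      rpow_le_rpow_of_exponent_ge hq0 hq1.le (le_mul_of_one_le_left hk.le hn)
    calc k * (1 - q ^ k) ≤ k * (1 - q ^ (((n : ℝ) + 1) * k)) := by gcongr
      _ ≤ ((n : ℝ) + 1) * (k * (1 - q ^ (((n : ℝ) + 1) * k))) :=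
          le_mul_of_one_le_left (mul_nonneg hk.le (by linarith)) hn
      _ = _ := by ring
  have hpow : q ^ (((n : ℝ) + 1) * k * s) = (q ^ (k * s)) ^ (n + 1) := by
    rw [← rpow_natCast, ← rpow_mul hq0.le]
    push_cast
    ring_nf
  rw [GammaqkTerm, hpow]
  exact div_le_div_of_nonneg_left (by positivity) (mul_pos hk (by linarith)) hden

theorem summable_GammaqkTerm (hs : 0 < s) : Summable (GammaqkTerm q k s) := by
  have hr : q ^ (k * s) < 1 := rpow_lt_one hq0.le hq1 (by positivity)
  refine Summable.of_nonneg_of_le (fun n => (GammaqkTerm_pos hq0 hq1 hk n).le)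
    (GammaqkTerm_le_geometric hq0 hq1 hk) ?_
  exact ((summable_geometric_of_lt_one (rpow_pos_of_pos hq0 _).le hr).comp_injective
    (add_left_injective 1)).div_const _

theorem GammaqkSeries_strictAntiOn : StrictAntiOn (GammaqkSeries q k) (Ioi 0) := by
  intro a (ha : 0 < a) b _ hab
  have hterm : ∀ n, GammaqkTerm q k b n < GammaqkTerm q k a n := fun n => by
    refine div_lt_div_of_pos_right ?_ (GammaqkTerm_denom_pos hq0 hq1 hk n)
    exact rpow_lt_rpow_of_exponent_gt hq0 hq1 (by gcongr)
  exact Summable.tsum_lt_tsum_of_nonneg (fun n => (GammaqkTerm_pos hq0 hq1 hk n).le)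
    (fun n => (hterm n).le) (hterm 0) (summable_GammaqkTerm hq0 hq1 hk ha)

end qkGamma

noncomputable def gammaRatioExponent (k q lam mu s : ℝ) : ℝ :=
  lam * (log (Gamma (s / k + 1)) + γ * (s / k)) - mu * GammaqkSeries q k s

theorem gammaRatioExponent_strictMonoOn {k q lam mu : ℝ} (hk : 0 < k) (hq0 : 0 < q) (hq1 : q < 1)
    (hlam : 0 ≤ lam) (hmu : 0 < mu) : StrictMonoOn (gammaRatioExponent k q lam mu) (Ioi 0) := by
  intro a (ha : 0 < a) b (hb : 0 < b) hab
  have hGamma := monotoneOn_log_Gamma_add_eulerMascheroni_mul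
    (a := a / k + 1) (b := b / k + 1) (by simp; positivity) (by simp; positivity)
    (by gcongr)
  have hseries := GammaqkSeries_strictAntiOn hq0 hq1 hk ha hb hab
  simp only [gammaRatioExponent]
  linarith [mul_le_mul_of_nonneg_left hGamma hlam, mul_lt_mul_of_pos_left hseries hmu]

theorem rpow_div_eq_exp_gammaRatioExponent_sub_mul {k q lam mu a b : ℝ} (hk : 0 < k) (hq1 : q < 1)
    (ha : 0 < a) (hb : 0 < b) :
    a ^ lam * exp (lam * γ / k * (a - b)) * Gammak k a ^ lam /
        (b ^ lam * k ^ (lam / k * (a - b)) * (1 - q) ^ (mu / k * (a - b)) * Gammaqk q k a ^ mu) =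
      exp (gammaRatioExponent k q lam mu a - gammaRatioExponent k q lam mu b) *
        (Gammak k b ^ lam / Gammaqk q k b ^ mu) := by
  have hlog : ∀ s, 0 < s → log s + log (Gammak k s) = s / k * log k + log (Gamma (s / k + 1)) :=
    fun s hs => by
      rw [← log_mul hs.ne' (Gammak_pos hk hs).ne', mul_Gammak hk hs,
        log_mul (by positivity) (Gamma_pos_of_pos (by positivity)).ne', log_rpow hk]
  simp only [rpow_def_of_pos ha, rpow_def_of_pos hb, rpow_def_of_pos hk,
    rpow_def_of_pos (sub_pos.2 hq1), rpow_def_of_pos (Gammak_pos hk ha),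
    rpow_def_of_pos (Gammak_pos hk hb), rpow_def_of_pos (Gammaqk_pos (k := k) (s := a) hq1),
    rpow_def_of_pos (Gammaqk_pos (k := k) (s := b) hq1), ← exp_add, ← exp_sub]
  congr 1
  rw [gammaRatioExponent, gammaRatioExponent, log_Gammaqk hq1, log_Gammaqk hq1]
  linear_combination lam * (hlog a ha - hlog b hb)

theorem stmt7_general (g : ℝ → ℝ) (hgpos : ∀ t ∈ Set.Ici (0 : ℝ), 0 < g t)
    (hgmono : StrictMonoOn g (Set.Ici (0 : ℝ)))
    (k : ℝ) (hk : 0 < k) (q : ℝ) (hq : q ∈ Set.Ioo (0 : ℝ) 1)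
    (lam mu : ℝ) (hlam : 0 < lam) (hmu : 0 < mu)
    (x y : ℝ) (hx : 0 < x) (hxy : x < y) :
    (g 0) ^ lam * Real.exp (lam * Real.eulerMascheroniConstant / k * (g 0 - g x)) *
        (Gammak k (g 0)) ^ lam /
        ((g x) ^ lam * k ^ (lam / k * (g 0 - g x)) * (1 - q) ^ (mu / k * (g 0 - g x)) *
          (Gammaqk q k (g 0)) ^ mu) <
      (Gammak k (g x)) ^ lam / (Gammaqk q k (g x)) ^ mu ∧
    (Gammak k (g x)) ^ lam / (Gammaqk q k (g x)) ^ mu <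
      (g y) ^ lam * Real.exp (lam * Real.eulerMascheroniConstant / k * (g y - g x)) *
        (Gammak k (g y)) ^ lam /
        ((g x) ^ lam * k ^ (lam / k * (g y - g x)) * (1 - q) ^ (mu / k * (g y - g x)) *
          (Gammaqk q k (g y)) ^ mu) := by
  obtain ⟨hq0, hq1⟩ := hq
  have hg0 : 0 < g 0 := hgpos 0 self_mem_Ici
  have h0x : g 0 < g x := hgmono self_mem_Ici hx.le hx
  have hxy' : g x < g y := hgmono hx.le (hx.trans hxy).le hxy
  have hgx : 0 < g x := hg0.trans h0x
  have hF : 0 < Gammak k (g x) ^ lam / Gammaqk q k (g x) ^ mu :=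
    div_pos (rpow_pos_of_pos (Gammak_pos hk hgx) _) (rpow_pos_of_pos (Gammaqk_pos hq1) _)
  have hmono := gammaRatioExponent_strictMonoOn hk hq0 hq1 hlam.le hmu
  rw [rpow_div_eq_exp_gammaRatioExponent_sub_mul hk hq1 hg0 hgx,
    rpow_div_eq_exp_gammaRatioExponent_sub_mul hk hq1 (hgx.trans hxy') hgx]
  exact ⟨mul_lt_of_lt_one_left hF (exp_lt_one_iff.2 (sub_neg.2 (hmono hg0 hgx h0x))),
    lt_mul_of_one_lt_left hF (one_lt_exp_iff.2 (sub_pos.2 (hmono hgx (hgx.trans hxy') hxy')))⟩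

theorem stmt7 (g : ℝ → ℝ) (hgpos : ∀ t ∈ Set.Ici (0 : ℝ), 0 < g t)
    (hgmono : StrictMonoOn g (Set.Ici (0 : ℝ)))
    (hgdiff : DifferentiableOn ℝ g (Set.Ici (0 : ℝ)))
    (k : ℝ) (hk : 0 < k) (q : ℝ) (hq : q ∈ Set.Ioo (0 : ℝ) 1)
    (lam mu : ℝ) (hlam : 0 < lam) (hmu : 0 < mu)
    (x y : ℝ) (hx : 0 < x) (hxy : x < y) :
    (g 0) ^ lam * Real.exp (lam * Real.eulerMascheroniConstant / k * (g 0 - g x)) *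
        (Gammak k (g 0)) ^ lam /
        ((g x) ^ lam * k ^ (lam / k * (g 0 - g x)) * (1 - q) ^ (mu / k * (g 0 - g x)) *
          (Gammaqk q k (g 0)) ^ mu) <
      (Gammak k (g x)) ^ lam / (Gammaqk q k (g x)) ^ mu ∧
    (Gammak k (g x)) ^ lam / (Gammaqk q k (g x)) ^ mu <
      (g y) ^ lam * Real.exp (lam * Real.eulerMascheroniConstant / k * (g y - g x)) *
        (Gammak k (g y)) ^ lam /
        ((g x) ^ lam * k ^ (lam / k * (g y - g x)) * (1 - q) ^ (mu / k * (g y - g x)) *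
          (Gammaqk q k (g y)) ^ mu) :=
  stmt7_general g hgpos hgmono k hk q hq lam mu hlam hmu x y hx hxy
end

section
/- Let α > 0 and β > 0 be real numbers, let p be a positive integer, let q ∈ (0,1), and let λ ≥ μ > 0 be real numbers. Then for all x, y with 0 < x < y < 1, the following double inequality holds: (1−q)^{−λβx}·Γ_q(α)^λ / ([p]_q^{μβx}·Γ_{(p,q)}(α)^μ) ≥ Γ_q(α+βx)^λ / Γ_{(p,q)}(α+βx)^μ ≥ (1−q)^{λβ(y−x)}·Γ_q(α+βy)^λ / ([p]_q^{−μβ(y−x)}·Γ_{(p,q)}(α+βy)^μ). -/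
open Real

section aux
variable (q : ℝ)

noncomputable def fterm (q s : ℝ) (n : ℕ) : ℝ :=
  q ^ (((n : ℝ) + 1) * s) / (((n : ℝ) + 1) * (1 - q ^ (n + 1)))

lemma denom_pos (hq0 : 0 < q) (hq1 : q < 1) (n : ℕ) :
    0 < ((n : ℝ) + 1) * (1 - q ^ (n + 1)) := by
  have h1 : (q : ℝ) ^ (n + 1) < 1 := pow_lt_one₀ hq0.le hq1 (Nat.succ_ne_zero n)
  have : (0:ℝ) < (n : ℝ) + 1 := by positivity
  nlinarith

lemma fterm_nonneg (hq0 : 0 < q) (hq1 : q < 1) (s : ℝ) (n : ℕ) :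
    0 ≤ fterm q s n :=
  div_nonneg (Real.rpow_nonneg hq0.le _) (denom_pos q hq0 hq1 n).le

lemma fterm_rw (hq0 : 0 < q) (s : ℝ) (n : ℕ) :
    q ^ (((n : ℝ) + 1) * s) = (q ^ s) ^ (n + 1) := by
  rw [mul_comm, Real.rpow_mul hq0.le]
  rw [show (((n:ℕ):ℝ) + 1) = ((n + 1 : ℕ) : ℝ) by push_cast; ring, Real.rpow_natCast]

lemma fsummable (hq0 : 0 < q) (hq1 : q < 1) (s : ℝ) (hs : 0 < s) :
    Summable (fterm q s) := by
  have hqs1 : q ^ s < 1 := Real.rpow_lt_one hq0.le hq1 hs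
  have hqs0 : 0 ≤ q ^ s := Real.rpow_nonneg hq0.le s
  have hgeo : Summable (fun n : ℕ => (q ^ s) ^ (n + 1) / (1 - q)) := by
    apply Summable.div_const
    exact (summable_geometric_of_lt_one hqs0 hqs1).comp_injective (add_left_injective 1)
  refine Summable.of_nonneg_of_le (fterm_nonneg q hq0 hq1 s) (fun n => ?_) hgeo
  rw [fterm, fterm_rw q hq0]
  apply div_le_div_of_nonneg_left (pow_nonneg hqs0 _) (by linarith)
  have h1 : (1:ℝ) ≤ (n : ℝ) + 1 := by
    have : (0:ℝ) ≤ (n:ℝ) := Nat.cast_nonneg n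
    linarith
  have h2 : q ^ (n + 1) ≤ q := by
    calc q ^ (n + 1) ≤ q ^ 1 := pow_le_pow_of_le_one hq0.le hq1.le (by omega)
    _ = q := pow_one q
  nlinarith

lemma fterm_anti (hq0 : 0 < q) (hq1 : q < 1) {s t : ℝ} (hst : s ≤ t) (n : ℕ) :
    fterm q t n ≤ fterm q s n := by
  have hnum : q ^ (((n:ℝ)+1)*t) ≤ q ^ (((n:ℝ)+1)*s) :=
    Real.rpow_le_rpow_of_exponent_ge hq0 hq1.le
      (mul_le_mul_of_nonneg_left hst (by positivity))
  exact div_le_div_of_nonneg_right hnum (denom_pos q hq0 hq1 n).le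
end aux

noncomputable def Sfun (q s : ℝ) : ℝ := ∑' n : ℕ, fterm q s n
noncomputable def Tfun (p : ℕ) (q s : ℝ) : ℝ := ∑ n ∈ Finset.range p, fterm q s n

lemma exp_rpow' (A y : ℝ) : Real.exp A ^ y = Real.exp (A * y) := by
  rw [Real.rpow_def_of_pos (Real.exp_pos A), Real.log_exp]

section main
variable {q : ℝ} (hq0 : 0 < q) (hq1 : q < 1) (p : ℕ)

include hq0 hq1

lemma key (lam mu : ℝ) (hmu : 0 < mu) (hlm : mu ≤ lam)
    (s t : ℝ) (hs : 0 < s) (hst : s ≤ t) :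
    lam * Sfun q t - mu * Tfun p q t ≤ lam * Sfun q s - mu * Tfun p q s := by
  have ht : 0 < t := hs.trans_le hst
  have hSs := (Summable.sum_add_tsum_nat_add p (fsummable q hq0 hq1 s hs)).symm
  have hSt := (Summable.sum_add_tsum_nat_add p (fsummable q hq0 hq1 t ht)).symm
  have hT : Tfun p q t ≤ Tfun p q s :=
    Finset.sum_le_sum fun n _ => fterm_anti q hq0 hq1 hst n
  have htail : (∑' n : ℕ, fterm q t (n + p)) ≤ ∑' n : ℕ, fterm q s (n + p) :=
    Summable.tsum_le_tsum (fun n => fterm_anti q hq0 hq1 hst (n + p))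
      ((summable_nat_add_iff p).2 (fsummable q hq0 hq1 t ht))
      ((summable_nat_add_iff p).2 (fsummable q hq0 hq1 s hs))
  have hSs' : Sfun q s = Tfun p q s + ∑' n : ℕ, fterm q s (n + p) := hSs
  have hSt' : Sfun q t = Tfun p q t + ∑' n : ℕ, fterm q t (n + p) := hSt
  rw [hSs', hSt']
  nlinarith [mul_le_mul_of_nonneg_left htail (le_of_lt (hmu.trans_le hlm)),
    mul_le_mul_of_nonneg_left hT (sub_nonneg.2 hlm)]

lemma h1q : (0:ℝ) < 1 - q := by linarith

lemma hpnq (hp : 0 < p) : 0 < pnq p q := by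
  have h2 : q ^ p < 1 := pow_lt_one₀ hq0.le hq1 hp.ne'
  have h3 := h1q hq0 hq1
  exact div_pos (by linarith) h3

lemma Gq_rpow (s lam : ℝ) :
    (Gammaq q s) ^ lam = Real.exp ((Real.log (1 - q) * (-s) + Sfun q s) * lam) := by
  rw [Gammaq, Real.rpow_def_of_pos (h1q hq0 hq1), ← Real.exp_add, exp_rpow', Sfun]
  simp only [fterm]

lemma Gpq_rpow (hp : 0 < p) (s mu : ℝ) :
    (Gammapq p q s) ^ mu
      = Real.exp ((Real.log (pnq p q) * s + Tfun p q s) * mu) := by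
  rw [Gammapq, Real.rpow_def_of_pos (hpnq hq0 hq1 p hp), ← Real.exp_add, exp_rpow', Tfun]
  simp only [fterm]

lemma core (hp : 0 < p) (lam mu : ℝ) (hmu : 0 < mu) (hlm : mu ≤ lam)
    (s d : ℝ) (hs : 0 < s) (hd : 0 ≤ d) :
    (Gammaq q (s + d)) ^ lam / (Gammapq p q (s + d)) ^ mu ≤
      (1 - q) ^ (-(lam * d)) * (Gammaq q s) ^ lam /
        ((pnq p q) ^ (mu * d) * (Gammapq p q s) ^ mu) := by
  have hk := key hq0 hq1 p lam mu hmu hlm s (s + d) hs (by linarith)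
  rw [Gq_rpow hq0 hq1, Gq_rpow hq0 hq1, Gpq_rpow hq0 hq1 p hp, Gpq_rpow hq0 hq1 p hp,
    Real.rpow_def_of_pos (h1q hq0 hq1), Real.rpow_def_of_pos (hpnq hq0 hq1 p hp),
    ← Real.exp_add, ← Real.exp_add, ← Real.exp_sub, ← Real.exp_sub, Real.exp_le_exp]
  set S1 := Sfun q s
  set S2 := Sfun q (s + d)
  set T1 := Tfun p q s
  set T2 := Tfun p q (s + d)
  ring_nf
  ring_nf at hk
  linarith

lemma core2 (hp : 0 < p) (lam mu : ℝ) (hmu : 0 < mu) (hlm : mu ≤ lam)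
    (s d : ℝ) (hs : 0 < s) (hd : 0 ≤ d) :
    (1 - q) ^ (lam * d) * (Gammaq q (s + d)) ^ lam /
        ((pnq p q) ^ (-(mu * d)) * (Gammapq p q (s + d)) ^ mu) ≤
      (Gammaq q s) ^ lam / (Gammapq p q s) ^ mu := by
  have hk := key hq0 hq1 p lam mu hmu hlm s (s + d) hs (by linarith)
  rw [Gq_rpow hq0 hq1, Gq_rpow hq0 hq1, Gpq_rpow hq0 hq1 p hp, Gpq_rpow hq0 hq1 p hp,
    Real.rpow_def_of_pos (h1q hq0 hq1), Real.rpow_def_of_pos (hpnq hq0 hq1 p hp),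
    ← Real.exp_add, ← Real.exp_add, ← Real.exp_sub, ← Real.exp_sub, Real.exp_le_exp]
  set S1 := Sfun q s
  set S2 := Sfun q (s + d)
  set T1 := Tfun p q s
  set T2 := Tfun p q (s + d)
  ring_nf
  ring_nf at hk
  linarith

end main

theorem stmt12 (a b : ℝ) (ha : 0 < a) (hb : 0 < b)
    (p : ℕ) (hp : 0 < p) (q : ℝ) (hq : q ∈ Set.Ioo (0 : ℝ) 1)
    (lam mu : ℝ) (hmu : 0 < mu) (hlm : mu ≤ lam)
    (x y : ℝ) (hx : 0 < x) (hxy : x < y) (hy : y < 1) :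
    (1 - q) ^ (-(lam * b * x)) * (Gammaq q a) ^ lam /
        ((pnq p q) ^ (mu * b * x) * (Gammapq p q a) ^ mu) ≥
      (Gammaq q (a + b * x)) ^ lam / (Gammapq p q (a + b * x)) ^ mu ∧
    (Gammaq q (a + b * x)) ^ lam / (Gammapq p q (a + b * x)) ^ mu ≥
      (1 - q) ^ (lam * b * (y - x)) * (Gammaq q (a + b * y)) ^ lam /
        ((pnq p q) ^ (-(mu * b * (y - x))) * (Gammapq p q (a + b * y)) ^ mu) := by
  obtain ⟨hq0, hq1⟩ := hq
  constructor
  · have h := core hq0 hq1 p hp lam mu hmu hlm a (b * x) ha (by positivity)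
    rw [show lam * (b * x) = lam * b * x by ring,
      show mu * (b * x) = mu * b * x by ring] at h
    exact h
  · have h := core2 hq0 hq1 p hp lam mu hmu hlm (a + b * x) (b * (y - x))
      (by positivity) (by nlinarith)
    rw [show a + b * x + b * (y - x) = a + b * y by ring,
      show lam * (b * (y - x)) = lam * b * (y - x) by ring,
      show mu * (b * (y - x)) = mu * b * (y - x) by ring] at h
    exact h
end

section
/- Let α > 0 and β > 0 be real numbers, let q ∈ (0,1), let k ≥ 1, and let λ ≥ μ > 0 be real numbers. Then for all x, y with 0 < x < y < 1, the following double inequality holds: (1−q)^{−λβx}·Γ_q(α)^λ / ((1−q)^{−(μ/k)βx}·Γ_{(q,k)}(α)^μ) ≥ Γ_q(α+βx)^λ / Γ_{(q,k)}(α+βx)^μ ≥ (1−q)^{λβ(y−x)}·Γ_q(α+βy)^λ / ((1−q)^{(μ/k)β(y−x)}·Γ_{(q,k)}(α+βy)^μ). -/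
open Real

/- Auxiliary definitions and lemmas -/

noncomputable def Sq (q s : ℝ) : ℝ :=
  ∑' n : ℕ, q ^ (((n : ℝ) + 1) * s) / (((n : ℝ) + 1) * (1 - q ^ (n + 1)))

noncomputable def Tq (q k s : ℝ) : ℝ :=
  ∑' n : ℕ, q ^ (((n : ℝ) + 1) * k * s) / (((n : ℝ) + 1) * k * (1 - q ^ (((n : ℝ) + 1) * k)))

lemma powdiff {u v k : ℝ} (hv : 0 < v) (hvu : v ≤ u) (hu : u ≤ 1) (hk : 1 ≤ k) :
    u ^ k - v ^ k ≤ k * (u - v) := by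
  have hu0 : 0 < u := lt_of_lt_of_le hv hvu
  have hber := one_add_mul_self_le_rpow_one_add
    (s := v / u - 1) (by
      have : 0 < v / u := div_pos hv hu0
      linarith) hk
  have heq : (1 : ℝ) + (v / u - 1) = v / u := by ring
  rw [heq, Real.div_rpow hv.le hu0.le] at hber
  have hupos : (0 : ℝ) < u ^ k := Real.rpow_pos_of_pos hu0 k
  have h2 : (1 + k * (v / u - 1)) * u ^ k ≤ v ^ k := by
    have := mul_le_mul_of_nonneg_right hber hupos.le
    rwa [div_mul_cancel₀ _ hupos.ne'] at this
  have hw : u ^ (k - 1) * u = u ^ k := by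
    rw [← Real.rpow_add_one hu0.ne' (k - 1)]; ring_nf
  have hw1 : u ^ (k - 1) ≤ 1 := Real.rpow_le_one hu0.le hu (by linarith)
  have hw0 : 0 < u ^ (k - 1) := Real.rpow_pos_of_pos hu0 _
  have hvu' : v / u * u ^ k = v * u ^ (k - 1) := by
    rw [← hw]; field_simp
  have h3 : u ^ k + k * (v * u ^ (k - 1)) - k * u ^ k ≤ v ^ k := by
    have : (1 + k * (v / u - 1)) * u ^ k
        = u ^ k + k * (v / u * u ^ k) - k * u ^ k := by ring
    rw [this, hvu'] at h2; exact h2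
  nlinarith [mul_nonneg (mul_nonneg (le_of_lt (lt_of_lt_of_le one_pos hk))
      (sub_nonneg.2 hvu)) (sub_nonneg.2 hw1)]

lemma termle {q k : ℝ} (hq0 : 0 < q) (hq1 : q < 1) (hk : 1 ≤ k) {M : ℝ} (hM : 1 ≤ M)
    {s1 s2 : ℝ} (hs1 : 0 < s1) (h12 : s1 ≤ s2) :
    (q ^ (M * k * s1) - q ^ (M * k * s2)) / (M * k * (1 - q ^ (M * k))) ≤
      (q ^ (M * s1) - q ^ (M * s2)) / (M * (1 - q ^ M)) := by
  have hM0 : 0 < M := lt_of_lt_of_le one_pos hM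
  have hk0 : 0 < k := lt_of_lt_of_le one_pos hk
  have hQ0 : 0 < q ^ M := Real.rpow_pos_of_pos hq0 M
  have hQ1 : q ^ M < 1 := Real.rpow_lt_one hq0.le hq1 hM0
  have e1 : q ^ (M * s1) = (q ^ M) ^ s1 := Real.rpow_mul hq0.le M s1
  have e2 : q ^ (M * s2) = (q ^ M) ^ s2 := Real.rpow_mul hq0.le M s2
  have e3 : q ^ (M * k * s1) = ((q ^ M) ^ s1) ^ k := by
    rw [mul_assoc, Real.rpow_mul hq0.le, mul_comm k s1, Real.rpow_mul hQ0.le]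
  have e4 : q ^ (M * k * s2) = ((q ^ M) ^ s2) ^ k := by
    rw [mul_assoc, Real.rpow_mul hq0.le, mul_comm k s2, Real.rpow_mul hQ0.le]
  have e5 : q ^ (M * k) = (q ^ M) ^ k := Real.rpow_mul hq0.le M k
  rw [e1, e2, e3, e4, e5]
  set Q : ℝ := q ^ M
  set u : ℝ := Q ^ s1 with hudef
  set v : ℝ := Q ^ s2 with hvdef
  have hu0 : 0 < u := Real.rpow_pos_of_pos hQ0 _
  have hv0 : 0 < v := Real.rpow_pos_of_pos hQ0 _
  have hvu : v ≤ u := Real.rpow_le_rpow_of_exponent_ge hQ0 hQ1.le h12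
  have hu1 : u < 1 := Real.rpow_lt_one hQ0.le hQ1 hs1
  have hQk1 : Q ^ k < 1 := Real.rpow_lt_one hQ0.le hQ1 hk0
  have hQkQ : Q ^ k ≤ Q := by
    have := Real.rpow_le_rpow_of_exponent_ge hQ0 hQ1.le hk
    rwa [Real.rpow_one] at this
  have hd1 : 0 < M * k * (1 - Q ^ k) := mul_pos (mul_pos hM0 hk0) (by linarith)
  have hd2 : 0 < M * (1 - Q) := mul_pos hM0 (by linarith)
  have hkey : u ^ k - v ^ k ≤ k * (u - v) := powdiff hv0 hvu hu1.le hk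
  have hnn : 0 ≤ u ^ k - v ^ k := sub_nonneg.2 (Real.rpow_le_rpow hv0.le hvu hk0.le)
  rw [div_le_div_iff₀ hd1 hd2]
  have h1 : (u ^ k - v ^ k) * (M * (1 - Q)) ≤ k * (u - v) * (M * (1 - Q)) :=
    mul_le_mul_of_nonneg_right hkey hd2.le
  have h2 : k * (u - v) * (M * (1 - Q)) ≤ (u - v) * (M * k * (1 - Q ^ k)) := by
    have huv : 0 ≤ u - v := sub_nonneg.2 hvu
    have : M * k * (1 - Q) ≤ M * k * (1 - Q ^ k) := by nlinarith
    nlinarith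
  linarith

lemma summable_Sq {q : ℝ} (hq0 : 0 < q) (hq1 : q < 1) {s : ℝ} (hs : 0 < s) :
    Summable (fun n : ℕ => q ^ (((n : ℝ) + 1) * s) / (((n : ℝ) + 1) * (1 - q ^ (n + 1)))) := by
  have h1q : 0 < 1 - q := by linarith
  have hr0 : 0 ≤ q ^ s := (Real.rpow_pos_of_pos hq0 s).le
  have hr1 : q ^ s < 1 := Real.rpow_lt_one hq0.le hq1 hs
  apply Summable.of_nonneg_of_le (f := fun n : ℕ => (q ^ s) ^ n * (q ^ s / (1 - q)))
  · intro n
    have hden : 0 < ((n : ℝ) + 1) * (1 - q ^ (n + 1)) := by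
      have : q ^ (n + 1) < 1 := pow_lt_one₀ hq0.le hq1 (Nat.succ_ne_zero n)
      have hn1 : (0 : ℝ) < (n : ℝ) + 1 := by positivity
      nlinarith
    positivity
  · intro n
    have hnum : q ^ (((n : ℝ) + 1) * s) = (q ^ s) ^ (n + 1) := by
      rw [mul_comm, Real.rpow_mul hq0.le, ← Real.rpow_natCast (q ^ s) (n + 1)]
      norm_num
    have hden : 1 - q ≤ ((n : ℝ) + 1) * (1 - q ^ (n + 1)) := by
      have h1 : q ^ (n + 1) ≤ q := by
        calc q ^ (n + 1) ≤ q ^ 1 := pow_le_pow_of_le_one hq0.le hq1.le (by omega)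
        _ = q := pow_one q
      have hn1 : (1 : ℝ) ≤ (n : ℝ) + 1 := by linarith [Nat.cast_nonneg (α := ℝ) n]
      nlinarith
    calc q ^ (((n : ℝ) + 1) * s) / (((n : ℝ) + 1) * (1 - q ^ (n + 1)))
        ≤ q ^ (((n : ℝ) + 1) * s) / (1 - q) := by
          gcongr
      _ = (q ^ s) ^ n * (q ^ s / (1 - q)) := by rw [hnum]; ring
  · exact (summable_geometric_of_lt_one hr0 hr1).mul_right _

lemma summable_Tq {q k : ℝ} (hq0 : 0 < q) (hq1 : q < 1) (hk : 1 ≤ k) {s : ℝ} (hs : 0 < s) :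
    Summable (fun n : ℕ =>
      q ^ (((n : ℝ) + 1) * k * s) / (((n : ℝ) + 1) * k * (1 - q ^ (((n : ℝ) + 1) * k)))) := by
  have hk0 : 0 < k := lt_of_lt_of_le one_pos hk
  have hr0 : 0 ≤ q ^ (k * s) := (Real.rpow_pos_of_pos hq0 _).le
  have hr1 : q ^ (k * s) < 1 := Real.rpow_lt_one hq0.le hq1 (by positivity)
  have hqk1 : q ^ k < 1 := Real.rpow_lt_one hq0.le hq1 hk0
  have hc : 0 < 1 - q ^ k := by linarith
  apply Summable.of_nonneg_of_le (f := fun n : ℕ => (q ^ (k * s)) ^ n * (q ^ (k * s) / (1 - q ^ k)))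
  · intro n
    have hMk : (1 : ℝ) ≤ ((n : ℝ) + 1) * k := by nlinarith [Nat.cast_nonneg (α := ℝ) n]
    have hlt : q ^ (((n : ℝ) + 1) * k) < 1 :=
      Real.rpow_lt_one hq0.le hq1 (by linarith)
    have hden : 0 < ((n : ℝ) + 1) * k * (1 - q ^ (((n : ℝ) + 1) * k)) := by nlinarith
    positivity
  · intro n
    have hnum : q ^ (((n : ℝ) + 1) * k * s) = (q ^ (k * s)) ^ (n + 1) := by
      rw [mul_assoc, mul_comm ((n : ℝ) + 1), Real.rpow_mul hq0.le,
        ← Real.rpow_natCast (q ^ (k * s)) (n + 1)]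
      norm_num
    have hMk : (1 : ℝ) ≤ ((n : ℝ) + 1) * k := by nlinarith [Nat.cast_nonneg (α := ℝ) n]
    have hle : q ^ (((n : ℝ) + 1) * k) ≤ q ^ k :=
      Real.rpow_le_rpow_of_exponent_ge hq0 hq1.le (by nlinarith [Nat.cast_nonneg (α := ℝ) n])
    have hden : 1 - q ^ k ≤ ((n : ℝ) + 1) * k * (1 - q ^ (((n : ℝ) + 1) * k)) := by
      have hlt : q ^ (((n : ℝ) + 1) * k) < 1 := Real.rpow_lt_one hq0.le hq1 (by linarith)
      nlinarith
    calc q ^ (((n : ℝ) + 1) * k * s) / (((n : ℝ) + 1) * k * (1 - q ^ (((n : ℝ) + 1) * k)))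
        ≤ q ^ (((n : ℝ) + 1) * k * s) / (1 - q ^ k) := by
          gcongr
      _ = (q ^ (k * s)) ^ n * (q ^ (k * s) / (1 - q ^ k)) := by rw [hnum]; ring
  · exact (summable_geometric_of_lt_one hr0 hr1).mul_right _

lemma combo {q k lam mu : ℝ} (hq0 : 0 < q) (hq1 : q < 1) (hk : 1 ≤ k)
    (hmu : 0 < mu) (hlm : mu ≤ lam) {s1 s2 : ℝ} (hs1 : 0 < s1) (h12 : s1 ≤ s2) :
    lam * Sq q s2 - mu * Tq q k s2 ≤ lam * Sq q s1 - mu * Tq q k s1 := by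
  have hs2 : 0 < s2 := lt_of_lt_of_le hs1 h12
  have hS1 := summable_Sq hq0 hq1 hs1
  have hS2 := summable_Sq hq0 hq1 hs2
  have hT1 := summable_Tq hq0 hq1 hk hs1
  have hT2 := summable_Tq hq0 hq1 hk hs2
  have hTd : Tq q k s1 - Tq q k s2 = ∑' n : ℕ,
      (q ^ (((n : ℝ) + 1) * k * s1) / (((n : ℝ) + 1) * k * (1 - q ^ (((n : ℝ) + 1) * k)))
        - q ^ (((n : ℝ) + 1) * k * s2) / (((n : ℝ) + 1) * k * (1 - q ^ (((n : ℝ) + 1) * k)))) :=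
    (Summable.tsum_sub hT1 hT2).symm
  have hSd : Sq q s1 - Sq q s2 = ∑' n : ℕ,
      (q ^ (((n : ℝ) + 1) * s1) / (((n : ℝ) + 1) * (1 - q ^ (n + 1)))
        - q ^ (((n : ℝ) + 1) * s2) / (((n : ℝ) + 1) * (1 - q ^ (n + 1)))) :=
    (Summable.tsum_sub hS1 hS2).symm
  have hmain : mu * (Tq q k s1 - Tq q k s2) ≤ lam * (Sq q s1 - Sq q s2) := by
    rw [hTd, hSd, ← tsum_mul_left, ← tsum_mul_left]
    apply Summable.tsum_le_tsum _ ((hT1.sub hT2).mul_left mu) ((hS1.sub hS2).mul_left lam)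
    intro n
    have hnpow : q ^ (n + 1) = q ^ (((n : ℝ) + 1)) := by
      rw [← Real.rpow_natCast q (n + 1)]
      norm_num
    have hM : (1 : ℝ) ≤ (n : ℝ) + 1 := le_add_of_nonneg_left (Nat.cast_nonneg n)
    have hBA : q ^ (((n : ℝ) + 1) * k * s1) / (((n : ℝ) + 1) * k * (1 - q ^ (((n : ℝ) + 1) * k)))
          - q ^ (((n : ℝ) + 1) * k * s2) / (((n : ℝ) + 1) * k * (1 - q ^ (((n : ℝ) + 1) * k)))
        ≤ q ^ (((n : ℝ) + 1) * s1) / (((n : ℝ) + 1) * (1 - q ^ (n + 1)))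
          - q ^ (((n : ℝ) + 1) * s2) / (((n : ℝ) + 1) * (1 - q ^ (n + 1))) := by
      rw [div_sub_div_same, div_sub_div_same, hnpow]
      exact termle hq0 hq1 hk hM hs1 h12
    have hB0 : 0 ≤ q ^ (((n : ℝ) + 1) * k * s1) / (((n : ℝ) + 1) * k * (1 - q ^ (((n : ℝ) + 1) * k)))
          - q ^ (((n : ℝ) + 1) * k * s2) / (((n : ℝ) + 1) * k * (1 - q ^ (((n : ℝ) + 1) * k))) := by
      rw [div_sub_div_same]
      apply div_nonneg
      · refine sub_nonneg.2 (Real.rpow_le_rpow_of_exponent_ge hq0 hq1.le ?_)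
        have hMk0 : (0:ℝ) < ((n : ℝ) + 1) * k := by positivity
        exact mul_le_mul_of_nonneg_left h12 hMk0.le
      · have hMk : (1 : ℝ) ≤ ((n : ℝ) + 1) * k := by
          have h1 : (1 : ℝ) ≤ (n : ℝ) + 1 := by linarith [Nat.cast_nonneg (α := ℝ) n]
          nlinarith [lt_of_lt_of_le one_pos hk]
        have hlt : q ^ (((n : ℝ) + 1) * k) < 1 := Real.rpow_lt_one hq0.le hq1 (by linarith)
        nlinarith
    calc mu * _ ≤ lam * _ := mul_le_mul_of_nonneg_right hlm hB0
      _ ≤ _ := mul_le_mul_of_nonneg_left hBA (le_of_lt (lt_of_lt_of_le hmu hlm))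
  linarith

lemma rep {q k lam mu : ℝ} (hq0 : 0 < q) (hq1 : q < 1) (hk0 : 0 < k) (e1 e2 s : ℝ) :
    (1 - q) ^ e1 * (Gammaq q s) ^ lam / ((1 - q) ^ e2 * (Gammaqk q k s) ^ mu)
      = Real.exp ((e1 + (-s) * lam) * Real.log (1 - q)
          - (e2 + (-s / k) * mu) * Real.log (1 - q)
          + (lam * Sq q s - mu * Tq q k s)) := by
  have h1q : 0 < 1 - q := by linarith
  have hGq : Gammaq q s = (1 - q) ^ (-s) * Real.exp (Sq q s) := rfl
  have hGk : Gammaqk q k s = (1 - q) ^ (-s / k) * Real.exp (Tq q k s) := rfl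
  have hGqpos : 0 < Gammaq q s := by rw [hGq]; positivity
  have hGkpos : 0 < Gammaqk q k s := by rw [hGk]; positivity
  have hLpos : 0 < (1 - q) ^ e1 * (Gammaq q s) ^ lam / ((1 - q) ^ e2 * (Gammaqk q k s) ^ mu) := by
    have := Real.rpow_pos_of_pos hGqpos lam
    have := Real.rpow_pos_of_pos hGkpos mu
    have := Real.rpow_pos_of_pos h1q e1
    have := Real.rpow_pos_of_pos h1q e2
    positivity
  rw [← Real.exp_log hLpos]
  congr 1
  rw [Real.log_div (by positivity) (by positivity), Real.log_mul (by positivity) (by positivity),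
    Real.log_mul (by positivity) (by positivity), Real.log_rpow h1q, Real.log_rpow h1q,
    Real.log_rpow hGqpos, Real.log_rpow hGkpos, hGq, hGk,
    Real.log_mul (by positivity) (Real.exp_pos _).ne', Real.log_mul (by positivity) (Real.exp_pos _).ne',
    Real.log_rpow h1q, Real.log_rpow h1q, Real.log_exp, Real.log_exp]
  ring

theorem stmt13 (a b : ℝ) (ha : 0 < a) (hb : 0 < b)
    (q : ℝ) (hq : q ∈ Set.Ioo (0 : ℝ) 1) (k : ℝ) (hk : 1 ≤ k)
    (lam mu : ℝ) (hmu : 0 < mu) (hlm : mu ≤ lam)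
    (x y : ℝ) (hx : 0 < x) (hxy : x < y) (hy : y < 1) :
    (1 - q) ^ (-(lam * b * x)) * (Gammaq q a) ^ lam /
        ((1 - q) ^ (-(mu / k * b * x)) * (Gammaqk q k a) ^ mu) ≥
      (Gammaq q (a + b * x)) ^ lam / (Gammaqk q k (a + b * x)) ^ mu ∧
    (Gammaq q (a + b * x)) ^ lam / (Gammaqk q k (a + b * x)) ^ mu ≥
      (1 - q) ^ (lam * b * (y - x)) * (Gammaq q (a + b * y)) ^ lam /
        ((1 - q) ^ (mu / k * b * (y - x)) * (Gammaqk q k (a + b * y)) ^ mu) := by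
  obtain ⟨hq0, hq1⟩ := hq
  have hk0 : 0 < k := lt_of_lt_of_le one_pos hk
  have h0 : ∀ s : ℝ, (Gammaq q s) ^ lam / (Gammaqk q k s) ^ mu
      = Real.exp ((0 + (-s) * lam) * Real.log (1 - q)
          - (0 + (-s / k) * mu) * Real.log (1 - q)
          + (lam * Sq q s - mu * Tq q k s)) := by
    intro s
    have := rep (lam := lam) (mu := mu) hq0 hq1 hk0 0 0 s
    simpa using this
  constructor
  · rw [ge_iff_le, h0 (a + b * x), rep (lam := lam) (mu := mu) hq0 hq1 hk0]
    rw [Real.exp_le_exp]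
    have hkey := combo hq0 hq1 hk hmu hlm (s1 := a) (s2 := a + b * x) ha
      (by nlinarith)
    have hident : ((-(lam * b * x) + (-a) * lam) * Real.log (1 - q)
          - (-(mu / k * b * x) + (-a / k) * mu) * Real.log (1 - q))
        - ((0 + (-(a + b * x)) * lam) * Real.log (1 - q)
          - (0 + (-(a + b * x) / k) * mu) * Real.log (1 - q)) = 0 := by ring
    linarith
  · rw [ge_iff_le, h0 (a + b * x), rep (lam := lam) (mu := mu) hq0 hq1 hk0]
    rw [Real.exp_le_exp]
    have hkey := combo hq0 hq1 hk hmu hlm (s1 := a + b * x) (s2 := a + b * y)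
      (by nlinarith) (by nlinarith)
    have hident : ((lam * b * (y - x) + (-(a + b * y)) * lam) * Real.log (1 - q)
          - (mu / k * b * (y - x) + (-(a + b * y) / k) * mu) * Real.log (1 - q))
        - ((0 + (-(a + b * x)) * lam) * Real.log (1 - q)
          - (0 + (-(a + b * x) / k) * mu) * Real.log (1 - q)) = 0 := by ring
    linarith
end
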